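/- At every point of the null-shell over the Schwarzschild exterior of mass M with φ_+ ≠ 0 one has the strict inequality Ω·|φ_+| < 2(r+6M)·E. Moreover, there exists a constant c > 0, depending only on M, such that along any radially reduced future-directed null geodesic, on any subinterval where φ_+ ≠ 0, the function s ↦ |log( Ω|φ_+| / (2(r+6M)E) )| is differentiable and its derivative satisfies d/ds |log( Ω|φ_+| / (2(r+6M)E) )| ≤ −c·(E + |p_u|/Ω²)/r². -/

import Mathlib

open Real

/-! With `q(r) = (1 + 6M/r)^{1/2} (1 − 3M/r)` one has `Ω φ₊ = r (p + qE)`, and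
`1 − q² = 27 (M/r)² (1 − 2M/r) > 0`; as `|p| ≤ E` on the null-shell, `Ω|φ₊| < 2rE`.
So the logarithm is negative and equals `log r + log|p + qE| − log(2(r+6M)E)`. Along a geodesic
`g = p + qE` solves the linear equation
`g' = g · (E / ((r − 2M)(1 + 6M/r)^{1/2}) − (r − 3M) p / (r (r − 2M)))`,
which makes the derivative explicit. Bounding `(1 + 6M/r)^{1/2} ≤ (r + 6M)/(r + 2M)` reduces the
estimate, with `c = M`, to a polynomial inequality that is a positive combination of `E + p ≥ 0`
and `E − p ≥ 0`. -/

/-- The trapping weight `φ₊ = (r/Ω)·p_{r*} − (r/Ω)·(1+6M/r)^{1/2}·(1−3M/r)·p_t`,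
with `p_t = −E` and `Ω = (1 − 2M/r)^{1/2}`. -/
noncomputable def phiPlus (M E rv pv : ℝ) : ℝ :=
  rv / Real.sqrt (1 - 2 * M / rv) * pv
    - rv / Real.sqrt (1 - 2 * M / rv) * Real.sqrt (1 + 6 * M / rv) * (1 - 3 * M / rv) * (-E)

noncomputable def trappingCoeff (M r : ℝ) : ℝ :=
  √(1 + 6 * M / r) * (1 - 3 * M / r)

lemma sqrt_mul_phiPlus {M r : ℝ} (E p : ℝ) (hΩ : 0 < 1 - 2 * M / r) :
    √(1 - 2 * M / r) * phiPlus M E r p = r * (p + trappingCoeff M r * E) := by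
  have : √(1 - 2 * M / r) ≠ 0 := (sqrt_pos.mpr hΩ).ne'
  unfold phiPlus trappingCoeff
  field_simp
  ring

lemma sqrt_mul_abs_phiPlus {M r : ℝ} (E p : ℝ) (hΩ : 0 < 1 - 2 * M / r) (hr : 0 ≤ r) :
    √(1 - 2 * M / r) * |phiPlus M E r p| = r * |p + trappingCoeff M r * E| := by
  rw [← abs_of_pos (sqrt_pos.mpr hΩ), ← abs_mul, sqrt_mul_phiPlus E p hΩ, abs_mul,
    abs_of_nonneg hr]

lemma add_trappingCoeff_mul_ne_zero {M r E p : ℝ} (hΩ : 0 < 1 - 2 * M / r)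
    (hφ : phiPlus M E r p ≠ 0) : p + trappingCoeff M r * E ≠ 0 := by
  intro hg
  apply hφ
  simpa [hg, (sqrt_pos.mpr hΩ).ne'] using sqrt_mul_phiPlus E p hΩ

lemma one_sub_two_mul_div_pos {M r : ℝ} (hr : 2 * M < r) (hM : 0 ≤ M) : 0 < 1 - 2 * M / r := by
  have : 0 < r := by linarith
  rw [sub_pos, div_lt_one this]
  exact hr

lemma abs_trappingCoeff_lt_one {M r : ℝ} (hM : 0 < M) (hr : 2 * M < r) :
    |trappingCoeff M r| < 1 := by
  have hr0 : 0 < r := by linarith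
  set x := M / r
  have hx : 0 < x := by positivity
  have hx2 : 2 * x < 1 := by rw [mul_div_assoc']; exact (div_lt_one hr0).mpr hr
  have hsq : trappingCoeff M r ^ 2 = 1 - 27 * x ^ 2 * (1 - 2 * x) := by
    rw [trappingCoeff, mul_pow, sq_sqrt (by positivity)]
    simp only [x, mul_div_assoc]
    ring
  apply abs_lt_of_sq_lt_sq _ zero_le_one
  rw [hsq]
  nlinarith [mul_pos (mul_pos hx hx) (sub_pos.mpr hx2)]

lemma abs_le_of_null_shell {M r p E ℓ : ℝ} (hΩ : 0 ≤ 1 - 2 * M / r) (hE : 0 ≤ E)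
    (hnull : E ^ 2 = p ^ 2 + (1 - 2 * M / r) * ℓ ^ 2 / r ^ 2) : |p| ≤ E := by
  refine abs_le_of_sq_le_sq ?_ hE
  have : 0 ≤ (1 - 2 * M / r) * ℓ ^ 2 / r ^ 2 := by positivity
  linarith

lemma sqrt_mul_abs_phiPlus_lt {M r p E ℓ : ℝ} (hM : 0 < M) (hr : 2 * M < r) (hE : 0 < E)
    (hnull : E ^ 2 = p ^ 2 + (1 - 2 * M / r) * ℓ ^ 2 / r ^ 2) :
    √(1 - 2 * M / r) * |phiPlus M E r p| < 2 * (r + 6 * M) * E := by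
  have hΩ := one_sub_two_mul_div_pos hr hM.le
  have hr0 : 0 < r := by linarith
  have hp := abs_le_of_null_shell hΩ.le hE.le hnull
  have hq := abs_trappingCoeff_lt_one hM hr
  calc √(1 - 2 * M / r) * |phiPlus M E r p|
      = r * |p + trappingCoeff M r * E| := sqrt_mul_abs_phiPlus E p hΩ hr0.le
    _ ≤ r * (|p| + |trappingCoeff M r| * E) := by
        gcongr
        exact (abs_add_le _ _).trans_eq (by rw [abs_mul, abs_of_pos hE])
    _ < r * (E + 1 * E) :=
        mul_lt_mul_of_pos_left (add_lt_add_of_le_of_lt hp (mul_lt_mul_of_pos_right hq hE)) hr0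
    _ ≤ 2 * (r + 6 * M) * E := by nlinarith

lemma abs_log_phiPlus_ratio_eq {M r p E ℓ : ℝ} (hM : 0 < M) (hr : 2 * M < r) (hE : 0 < E)
    (hnull : E ^ 2 = p ^ 2 + (1 - 2 * M / r) * ℓ ^ 2 / r ^ 2) (hφ : phiPlus M E r p ≠ 0) :
    |log (√(1 - 2 * M / r) * |phiPlus M E r p| / (2 * (r + 6 * M) * E))|
      = log (2 * (r + 6 * M) * E) - log r - log (p + trappingCoeff M r * E) := by
  have hΩ := one_sub_two_mul_div_pos hr hM.le
  have hr0 : 0 < r := by linarith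
  have hden : 0 < 2 * (r + 6 * M) * E := by positivity
  have hnum := sqrt_mul_abs_phiPlus E p hΩ hr0.le
  have hg := add_trappingCoeff_mul_ne_zero hΩ hφ
  have hpos : 0 < √(1 - 2 * M / r) * |phiPlus M E r p| / (2 * (r + 6 * M) * E) := by
    rw [hnum]; positivity
  have hlt : √(1 - 2 * M / r) * |phiPlus M E r p| / (2 * (r + 6 * M) * E) < 1 :=
    (div_lt_one hden).mpr (sqrt_mul_abs_phiPlus_lt hM hr hE hnull)
  rw [abs_of_neg (log_neg hpos hlt), hnum, log_div (by positivity) hden.ne',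
    log_mul hr0.ne' (abs_ne_zero.mpr hg), log_abs]
  ring

lemma hasDerivAt_trappingCoeff {M r : ℝ} (hr : r ≠ 0) (hb : 0 < 1 + 6 * M / r) :
    HasDerivAt (trappingCoeff M) (27 * M ^ 2 / (r ^ 3 * √(1 + 6 * M / r))) r := by
  have hinv := hasDerivAt_inv hr
  have hb' : HasDerivAt (fun x => √(1 + 6 * M / x))
      (-(6 * M) / r ^ 2 / (2 * √(1 + 6 * M / r))) r := by
    have := ((hinv.const_mul (6 * M)).const_add 1).sqrt hb.ne'
    simpa only [div_eq_mul_inv, mul_neg, neg_mul] using this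
  have hl : HasDerivAt (fun x => 1 - 3 * M / x) (3 * M / r ^ 2) r := by
    have := (hinv.const_mul (3 * M)).const_sub 1
    simpa only [div_eq_mul_inv, mul_neg, sub_neg_eq_add, zero_sub, neg_neg] using this
  have hs : √(1 + 6 * M / r) ^ 2 * r = r + 6 * M := by
    rw [sq_sqrt hb.le]; field_simp
  have hs0 : √(1 + 6 * M / r) ≠ 0 := (sqrt_pos.mpr hb).ne'
  refine (hb'.mul hl).congr_deriv ?_
  generalize √(1 + 6 * M / r) = b at hs hs0 ⊢
  field_simp
  linear_combination 6 * M * hs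

lemma null_shell_deriv_add_trappingCoeff_mul_eq {M r p E ℓ : ℝ} (hM : 0 ≤ M) (hr : 2 * M < r)
    (hnull : E ^ 2 = p ^ 2 + (1 - 2 * M / r) * ℓ ^ 2 / r ^ 2) :
    (r - 3 * M) / r ^ 4 * ℓ ^ 2 + 27 * M ^ 2 / (r ^ 3 * √(1 + 6 * M / r)) * p * E
      = (p + trappingCoeff M r * E)
        * (E / ((r - 2 * M) * √(1 + 6 * M / r)) - (r - 3 * M) * p / (r * (r - 2 * M))) := by
  have hr0 : 0 < r := by linarith
  have hb : 0 < 1 + 6 * M / r := by positivity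
  have hs : √(1 + 6 * M / r) ^ 2 * r = r + 6 * M := by
    rw [sq_sqrt hb.le]; field_simp
  have hℓ : (r - 2 * M) * ℓ ^ 2 = (E ^ 2 - p ^ 2) * r ^ 3 := by
    rw [hnull]; field_simp; ring
  have hs0 : √(1 + 6 * M / r) ≠ 0 := (sqrt_pos.mpr hb).ne'
  rw [trappingCoeff]
  generalize √(1 + 6 * M / r) = b at hs hs0 ⊢
  field_simp
  rw [eq_div_iff (by linarith)]
  linear_combination (r - 3 * M) * b * hℓ + r * (r - 3 * M) ^ 2 * p * E * hs

lemma hasDerivWithinAt_log_add_trappingCoeff_mul {M E ℓ : ℝ} {I : Set ℝ} {r prs : ℝ → ℝ}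
    {s : ℝ} (hM : 0 ≤ M) (hr : 2 * M < r s) (hrd : HasDerivWithinAt r (prs s) I s)
    (hpd : HasDerivWithinAt prs ((r s - 3 * M) / r s ^ 4 * ℓ ^ 2) I s)
    (hnull : E ^ 2 = prs s ^ 2 + (1 - 2 * M / r s) * ℓ ^ 2 / r s ^ 2)
    (hg : prs s + trappingCoeff M (r s) * E ≠ 0) :
    HasDerivWithinAt (fun u => log (prs u + trappingCoeff M (r u) * E))
      (E / ((r s - 2 * M) * √(1 + 6 * M / r s)) - (r s - 3 * M) * prs s / (r s * (r s - 2 * M)))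
      I s := by
  have hr0 : 0 < r s := by linarith
  have hq :=
    (hasDerivAt_trappingCoeff (M := M) hr0.ne' (by positivity)).comp_hasDerivWithinAt s hrd
  have hgd : HasDerivWithinAt (fun u => prs u + trappingCoeff M (r u) * E)
      ((r s - 3 * M) / r s ^ 4 * ℓ ^ 2
        + 27 * M ^ 2 / (r s ^ 3 * √(1 + 6 * M / r s)) * prs s * E) I s :=
    hpd.add (hq.mul_const E)
  rw [null_shell_deriv_add_trappingCoeff_mul_eq hM hr hnull] at hgd
  simpa only [mul_div_cancel_left₀ _ hg] using hgd.log hg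

lemma sqrt_one_add_six_mul_div_le {M r : ℝ} (hM : 0 ≤ M) (hr : 2 * M ≤ r) (hr0 : 0 < r) :
    √(1 + 6 * M / r) ≤ (r + 6 * M) / (r + 2 * M) := by
  rw [sqrt_le_left (by positivity), div_pow, one_add_div hr0.ne',
    div_le_div_iff₀ hr0 (by positivity)]
  nlinarith [mul_nonneg (mul_nonneg hM (sub_nonneg.mpr hr)) (by linarith : (0 : ℝ) ≤ r + 6 * M)]

lemma log_ratio_deriv_le {M r p E : ℝ} (hM : 0 < M) (hr : 2 * M < r) (hp : |p| ≤ E) :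
    p / (r + 6 * M) - p / r
        - (E / ((r - 2 * M) * √(1 + 6 * M / r)) - (r - 3 * M) * p / (r * (r - 2 * M)))
      ≤ -M * (E + (E + p) / 2 / (1 - 2 * M / r)) / r ^ 2 := by
  have hr0 : 0 < r := by linarith
  have hr2 : 0 < r - 2 * M := by linarith
  have hE : 0 ≤ E := (abs_nonneg p).trans hp
  obtain ⟨hpE, hEp⟩ := abs_le.mp hp
  have hsqrt : E * (r + 2 * M) / ((r - 2 * M) * (r + 6 * M))
      ≤ E / ((r - 2 * M) * √(1 + 6 * M / r)) := by
    calc E * (r + 2 * M) / ((r - 2 * M) * (r + 6 * M))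
        = E / ((r - 2 * M) * ((r + 6 * M) / (r + 2 * M))) := by
          field_simp
      _ ≤ E / ((r - 2 * M) * √(1 + 6 * M / r)) :=
        div_le_div_of_nonneg_left hE (by positivity)
          (mul_le_mul_of_nonneg_left (sqrt_one_add_six_mul_div_le hM.le hr.le hr0) hr2.le)
  have hgap : -M * (E + (E + p) / 2 / (1 - 2 * M / r)) / r ^ 2
      - (p / (r + 6 * M) - p / r
        - (E * (r + 2 * M) / ((r - 2 * M) * (r + 6 * M)) - (r - 3 * M) * p / (r * (r - 2 * M))))
      = ((E + p) * (M * (3 * r ^ 2 - 4 * M * r + 12 * M ^ 2))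
          + (E - p) * (2 * (r - 2 * M) * (r ^ 2 + M * r - 3 * M ^ 2)))
        / (2 * r ^ 2 * (r + 6 * M) * (r - 2 * M)) := by
    have : r - M * 2 ≠ 0 := by linarith
    have : r + 6 * M ≠ 0 := by positivity
    field_simp
    ring
  have hnum : 0 ≤ (E + p) * (M * (3 * r ^ 2 - 4 * M * r + 12 * M ^ 2))
      + (E - p) * (2 * (r - 2 * M) * (r ^ 2 + M * r - 3 * M ^ 2)) := by
    have h1 : 0 ≤ 3 * r ^ 2 - 4 * M * r + 12 * M ^ 2 := by nlinarith [sq_nonneg (r - 2 * M)]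
    have h2 : 0 ≤ r ^ 2 + M * r - 3 * M ^ 2 := by nlinarith
    have := mul_nonneg (by linarith : 0 ≤ E + p) (mul_nonneg hM.le h1)
    have := mul_nonneg (by linarith : 0 ≤ E - p) (mul_nonneg (mul_nonneg zero_le_two hr2.le) h2)
    linarith
  have := div_nonneg hnum (by positivity : (0 : ℝ) ≤ 2 * r ^ 2 * (r + 6 * M) * (r - 2 * M))
  linarith

theorem schwarzschild_log_phiPlus_estimate (M : ℝ) (hM : 0 < M) :
    (∀ rv pv E ℓ : ℝ, 2 * M < rv → 0 < E → 0 ≤ ℓ →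
        E ^ 2 = pv ^ 2 + (1 - 2 * M / rv) * ℓ ^ 2 / rv ^ 2 →
        phiPlus M E rv pv ≠ 0 →
        Real.sqrt (1 - 2 * M / rv) * |phiPlus M E rv pv| < 2 * (rv + 6 * M) * E) ∧
    ∃ c > 0, ∀ (I : Set ℝ), I.OrdConnected →
      ∀ (r prs : ℝ → ℝ) (E ℓ : ℝ), 0 < E → 0 ≤ ℓ →
      (∀ s ∈ I, 2 * M < r s) →
      (∀ s ∈ I, HasDerivWithinAt r (prs s) I s) →
      (∀ s ∈ I, HasDerivWithinAt prs ((r s - 3 * M) / (r s) ^ 4 * ℓ ^ 2) I s) →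
      (∀ s ∈ I, E ^ 2 = (prs s) ^ 2 + (1 - 2 * M / r s) * ℓ ^ 2 / (r s) ^ 2) →
      (∀ s ∈ I, phiPlus M E (r s) (prs s) ≠ 0) →
      ∀ s ∈ I, ∃ d,
        HasDerivWithinAt
          (fun u => |Real.log (Real.sqrt (1 - 2 * M / r u) * |phiPlus M E (r u) (prs u)|
              / (2 * (r u + 6 * M) * E))|) d I s ∧
        d ≤ -c * (E + ((E + prs s) / 2) / (1 - 2 * M / r s)) / (r s) ^ 2 := by
  refine ⟨fun rv pv E ℓ hr hE _ hnull _ => sqrt_mul_abs_phiPlus_lt hM hr hE hnull, M, hM, ?_⟩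
  intro I _ r prs E ℓ hE _ hr hrd hpd hnull hφ s hs
  have hΩ := one_sub_two_mul_div_pos (hr s hs) hM.le
  have hr0 : 0 < r s := by linarith [hr s hs]
  have hlogr : HasDerivWithinAt (fun u => log (r u)) (prs s / r s) I s :=
    (hrd s hs).log hr0.ne'
  have hlogden : HasDerivWithinAt (fun u => log (2 * (r u + 6 * M) * E)) (prs s / (r s + 6 * M))
      I s := by
    have := ((((hrd s hs).add_const (6 * M)).const_mul 2).mul_const E).log (by positivity)
    rwa [mul_div_mul_right _ _ hE.ne', mul_div_mul_left _ _ two_ne_zero] at this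
  have hlogg := hasDerivWithinAt_log_add_trappingCoeff_mul hM.le (hr s hs) (hrd s hs) (hpd s hs)
    (hnull s hs) (add_trappingCoeff_mul_ne_zero hΩ (hφ s hs))
  refine ⟨_, ((hlogden.sub hlogr).sub hlogg).congr_of_mem ?_ hs,
    log_ratio_deriv_le hM (hr s hs) (abs_le_of_null_shell hΩ.le hE.le (hnull s hs))⟩
  exact fun u hu => abs_log_phiPlus_ratio_eq hM (hr u hu) hE (hnull u hu) (hφ u hu)
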